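/- arXiv:2510.19759 — 3 statements merged into one kernel-verified Lean document; each statement's English description precedes it below -/
import Mathlib

section
/- Fix an index b with 1 ≤ b ≤ N, and assume q_b ≠ t_m for all m = 1,…,N_t. Then the partial derivative of R with respect to the x-coordinate x_b of q_b exists and equals (4πρ/λ) · Im( Σ_{m=1}^{N_t} [C_2(q)(m,b) − C_1(q)(m,b)] · ((x_b − x_{t,m}) / ‖t_m − q_b‖) · exp(i(2π/λ)‖t_m − q_b‖) ), where x_{t,m} denotes the x-coordinate of t_m and C_j(q)(m,b) is the (m,b) entry of C_j(q). -/
open Matrix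
open scoped ComplexOrder

/-- The near-field channel matrix `H(q) ∈ ℂ^{N×Nt}` with entries
`H(q)_{b,m} = ρ · exp(i (2π/λ) ‖t_m − q_b‖)`. -/
noncomputable def nearFieldH (lam ρ : ℝ) {N Nt : ℕ}
    (t : Fin Nt → EuclideanSpace ℝ (Fin 3))
    (q : Fin N → EuclideanSpace ℝ (Fin 3)) :
    Matrix (Fin N) (Fin Nt) ℂ :=
  Matrix.of fun b m =>
    (ρ : ℂ) * Complex.exp (Complex.I * ((2 * Real.pi / lam * ‖t m - q b‖ : ℝ) : ℂ))

/-- `A(q) = H(q) T H(q)ᴴ + σ² I`. -/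
noncomputable def nearFieldA (lam ρ σ : ℝ) {N Nt : ℕ}
    (T : Matrix (Fin Nt) (Fin Nt) ℂ)
    (t : Fin Nt → EuclideanSpace ℝ (Fin 3))
    (q : Fin N → EuclideanSpace ℝ (Fin 3)) :
    Matrix (Fin N) (Fin N) ℂ :=
  nearFieldH lam ρ t q * T * (nearFieldH lam ρ t q)ᴴ + ((σ ^ 2 : ℝ) : ℂ) • 1

/-- `C(q) = T H(q)ᴴ A(q)⁻¹`. -/
noncomputable def nearFieldC (lam ρ σ : ℝ) {N Nt : ℕ}
    (T : Matrix (Fin Nt) (Fin Nt) ℂ)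
    (t : Fin Nt → EuclideanSpace ℝ (Fin 3))
    (q : Fin N → EuclideanSpace ℝ (Fin 3)) :
    Matrix (Fin Nt) (Fin N) ℂ :=
  T * (nearFieldH lam ρ t q)ᴴ * (nearFieldA lam ρ σ T t q)⁻¹

/-- `R(q) = ln det A₁(q) − ln det A₂(q)` (the determinants are real and positive). -/
noncomputable def nearFieldR (lam ρ σ : ℝ) {N Nt : ℕ}
    (T1 T2 : Matrix (Fin Nt) (Fin Nt) ℂ)
    (t : Fin Nt → EuclideanSpace ℝ (Fin 3))
    (q : Fin N → EuclideanSpace ℝ (Fin 3)) : ℝ :=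
  Real.log ((nearFieldA lam ρ σ T1 t q).det.re)
    - Real.log ((nearFieldA lam ρ σ T2 t q).det.re)

/-!
By Jacobi's formula, `d/dx log det A = Re tr(A⁻¹ A')`, the determinant of the positive definite
matrix `A` being real and positive. Moving `q_b` only changes row `b` of `H`, and
`A' = H' T Hᴴ + H T H'ᴴ`; since `T` and `A⁻¹` are Hermitian the two terms are conjugate under the
trace, so the derivative is `2 Re tr(C H')` with `C = T Hᴴ A⁻¹`. Row `b` of `H'` has entries
`i (2π/λ) (∂‖t_m − q_b‖/∂x_b) H_{b,m}`, and `Re (i z) = − Im z` turns the difference of the two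
log-determinants into the stated imaginary part.
-/

open scoped InnerProductSpace

theorem HasDerivAt.norm {F : Type*} [NormedAddCommGroup F] [InnerProductSpace ℝ F]
    {f : ℝ → F} {f' : F} {x : ℝ} (hf : HasDerivAt f f' x) (h0 : f x ≠ 0) :
    HasDerivAt (fun y => ‖f y‖) (⟪f x, f'⟫_ℝ / ‖f x‖) x := by
  have hsqrt := hf.norm_sq.sqrt (by positivity)
  simp only [Real.sqrt_sq (norm_nonneg _)] at hsqrt
  refine hsqrt.congr_deriv ?_
  field_simp

namespace EuclideanSpace

variable {ι : Type*} [Fintype ι] [DecidableEq ι]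

theorem hasDerivAt_toLp_update (p : EuclideanSpace ℝ ι) (i : ι) (x : ℝ) :
    HasDerivAt (fun y => WithLp.toLp 2 (Function.update p i y)) (single i 1) x := by
  have hline : (fun y => WithLp.toLp 2 (Function.update p i y))
      = fun y => WithLp.toLp 2 (Function.update p i 0) + y • single i (1 : ℝ) := by
    ext y j
    by_cases hj : j = i
    · subst hj; simp
    · simp [hj]
  rw [hline]
  simpa using ((hasDerivAt_id x).smul_const (single i (1 : ℝ))).const_add
    (WithLp.toLp 2 (Function.update p i 0))

theorem hasDerivAt_norm_sub_toLp_update {p v : EuclideanSpace ℝ ι} (hpv : p ≠ v) (i : ι) :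
    HasDerivAt (fun y => ‖v - WithLp.toLp 2 (Function.update p i y)‖)
      ((p i - v i) / ‖v - p‖) (p i) := by
  have hd := HasDerivAt.norm ((hasDerivAt_toLp_update p i (p i)).const_sub v)
    (by simpa [sub_eq_zero] using hpv.symm)
  simp only [Function.update_eq_self, WithLp.toLp_ofLp, inner_neg_right, inner_single_right] at hd
  refine hd.congr_deriv ?_
  simp

end EuclideanSpace

namespace Matrix

theorem hasDerivAt_mul_mul_conjTranspose_apply {m n : Type*} [Fintype m]
    {H : ℝ → Matrix n m ℂ} {H' : Matrix n m ℂ} {x : ℝ} (T : Matrix m m ℂ)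
    (hH : ∀ i j, HasDerivAt (fun y => H y i j) (H' i j) x) (i j : n) :
    HasDerivAt (fun y => (H y * T * (H y)ᴴ) i j) ((H' * T * (H x)ᴴ + H x * T * H'ᴴ) i j) x := by
  simp only [mul_apply, add_apply, conjTranspose_apply, ← Finset.sum_add_distrib]
  exact HasDerivAt.fun_sum fun k _ =>
    (HasDerivAt.fun_sum fun l _ => (hH i l).mul_const (T l k)).mul (hH j k).star

variable {n : Type*} [Fintype n]

theorem trace_adjugate_mul {R : Type*} [CommRing R] [DecidableEq n] (A B : Matrix n n R) :
    (A.adjugate * B).trace = ∑ j, (A.updateCol j fun i => B i j).det := by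
  refine Finset.sum_congr rfl fun j _ => ?_
  rw [← cramer_apply, cramer_eq_adjugate_mulVec]
  rfl

theorem hasDerivAt_det {𝕜 R : Type*} [NontriviallyNormedField 𝕜] [NormedCommRing R]
    [NormedAlgebra 𝕜 R] [DecidableEq n] {M : 𝕜 → Matrix n n R} {M' : Matrix n n R} {x : 𝕜}
    (hM : ∀ i j, HasDerivAt (fun y => M y i j) (M' i j) x) :
    HasDerivAt (fun y => (M y).det) ((M x).adjugate * M').trace x := by
  -- Differentiating the Leibniz expansion replaces one column `j` of `M x` by that of `M'`.
  have hexpand := HasDerivAt.fun_sum fun σ (_ : σ ∈ Finset.univ) =>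
    (HasDerivAt.fun_finsetProd fun i (_ : i ∈ Finset.univ) => hM (σ i) i).const_mul
      ((Equiv.Perm.sign σ : ℤ) : R)
  rw [show (fun y => (M y).det) = _ from funext fun y => det_apply' (M y)]
  refine hexpand.congr_deriv ?_
  simp only [trace_adjugate_mul, det_apply', Finset.mul_sum]
  conv_rhs => rw [Finset.sum_comm]
  refine Finset.sum_congr rfl fun σ _ => Finset.sum_congr rfl fun j _ => ?_
  rw [← Finset.mul_prod_erase _ _ (Finset.mem_univ j), updateCol_self, smul_eq_mul,
    mul_comm (M' _ _)]
  congr 2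
  exact Finset.prod_congr rfl fun i hi => (updateCol_ne (Finset.ne_of_mem_erase hi)).symm

theorem hasDerivAt_log_re_det [DecidableEq n] {M : ℝ → Matrix n n ℂ} {M' : Matrix n n ℂ} {x : ℝ}
    (hM : ∀ i j, HasDerivAt (fun y => M y i j) (M' i j) x) (hpos : 0 < (M x).det) :
    HasDerivAt (fun y => Real.log (M y).det.re) ((M x)⁻¹ * M').trace.re x := by
  obtain ⟨hre, him⟩ := Complex.lt_def.mp hpos
  have hreal : (M x).det = ((M x).det.re : ℂ) := Complex.ext rfl (by simp [← him])
  have hlog := (Complex.reCLM.hasFDerivAt.comp_hasDerivAt x (hasDerivAt_det hM)).log hre.ne'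
  refine hlog.congr_deriv ?_
  rw [inv_def, smul_mul, trace_smul, Ring.inverse_eq_inv', hreal, ← Complex.ofReal_inv,
    smul_eq_mul, Complex.re_ofReal_mul, div_eq_inv_mul]
  rfl

theorem re_trace_mul_add_conjTranspose {A K : Matrix n n ℂ} (hA : A.IsHermitian) :
    (A * (K + Kᴴ)).trace.re = 2 * (A * K).trace.re := by
  have hconj : (A * Kᴴ).trace = star (A * K).trace := by
    rw [← trace_conjTranspose, conjTranspose_mul, hA.eq, trace_mul_comm]
  rw [mul_add, trace_add, Complex.add_re, hconj, Complex.star_def, Complex.conj_re]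
  ring

theorem hasDerivAt_log_re_det_mul_mul_conjTranspose_add_smul_one [DecidableEq n] {m : Type*}
    [Fintype m] {H : ℝ → Matrix n m ℂ} {H' : Matrix n m ℂ} {x : ℝ} {T : Matrix m m ℂ}
    (hT : T.PosSemidef) {s : ℝ} (hs : 0 < s)
    (hH : ∀ i j, HasDerivAt (fun y => H y i j) (H' i j) x) :
    HasDerivAt (fun y => Real.log (H y * T * (H y)ᴴ + (s : ℂ) • 1).det.re)
      (2 * (T * (H x)ᴴ * (H x * T * (H x)ᴴ + (s : ℂ) • 1)⁻¹ * H').trace.re) x := by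
  set A := H x * T * (H x)ᴴ + (s : ℂ) • 1
  have hA : A.PosDef := PosDef.posSemidef_add (hT.mul_mul_conjTranspose_same (H x)) (by
    rw [smul_one_eq_diagonal]
    exact posDef_diagonal_iff.mpr fun _ => by exact_mod_cast hs)
  have hK : H x * T * H'ᴴ = (H' * T * (H x)ᴴ)ᴴ := by
    simp only [conjTranspose_mul, conjTranspose_conjTranspose, hT.isHermitian.eq, Matrix.mul_assoc]
  have hA' : ∀ i j, HasDerivAt (fun y => (H y * T * (H y)ᴴ + (s : ℂ) • (1 : Matrix n n ℂ)) i j)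
      ((H' * T * (H x)ᴴ + H x * T * H'ᴴ) i j) x := fun i j =>
    (hasDerivAt_mul_mul_conjTranspose_apply T hH i j).add_const _
  refine (hasDerivAt_log_re_det hA' hA.det_pos).congr_deriv ?_
  rw [hK, re_trace_mul_add_conjTranspose hA.isHermitian.inv, trace_mul_comm,
    show H' * T * (H x)ᴴ * A⁻¹ = H' * (T * (H x)ᴴ * A⁻¹) by simp only [Matrix.mul_assoc],
    trace_mul_comm]

end Matrix

noncomputable def nearFieldHDeriv (lam ρ : ℝ) {N Nt : ℕ}
    (t : Fin Nt → EuclideanSpace ℝ (Fin 3)) (q : Fin N → EuclideanSpace ℝ (Fin 3))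
    (b : Fin N) (i : Fin 3) : Matrix (Fin N) (Fin Nt) ℂ :=
  Matrix.of fun b' m =>
    if b' = b then
      Complex.I * ((2 * Real.pi / lam * ((q b i - t m i) / ‖t m - q b‖) : ℝ) : ℂ) *
        nearFieldH lam ρ t q b m
    else 0

section NearField

variable {N Nt : ℕ} (lam ρ : ℝ) {t : Fin Nt → EuclideanSpace ℝ (Fin 3)}
  {q : Fin N → EuclideanSpace ℝ (Fin 3)} {b : Fin N}

theorem hasDerivAt_nearFieldH_apply (hq : ∀ m, q b ≠ t m) (i : Fin 3) (b' : Fin N) (m : Fin Nt) :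
    HasDerivAt
      (fun x =>
        nearFieldH lam ρ t (Function.update q b (WithLp.toLp 2 (Function.update (q b) i x))) b' m)
      (nearFieldHDeriv lam ρ t q b i b' m) (q b i) := by
  by_cases hb : b' = b
  · subst hb
    have hphase := (((EuclideanSpace.hasDerivAt_norm_sub_toLp_update (hq m) i).const_mul
      (2 * Real.pi / lam)).ofReal_comp.const_mul Complex.I).cexp.const_mul (ρ : ℂ)
    simp only [nearFieldH, nearFieldHDeriv, Matrix.of_apply, Function.update_self]
    refine hphase.congr_deriv ?_
    simp only [Function.update_eq_self, WithLp.toLp_ofLp]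
    push_cast
    ring
  · simp only [nearFieldH, nearFieldHDeriv, Matrix.of_apply, Function.update_of_ne hb, if_neg hb]
    exact hasDerivAt_const _ _

theorem trace_mul_nearFieldHDeriv (i : Fin 3) (C : Matrix (Fin Nt) (Fin N) ℂ) :
    (C * nearFieldHDeriv lam ρ t q b i).trace
      = Complex.I * ((2 * Real.pi / lam * ρ : ℝ) : ℂ) *
        ∑ m, C m b * (((q b i - t m i) / ‖t m - q b‖ : ℝ) : ℂ) *
          Complex.exp (Complex.I * ((2 * Real.pi / lam * ‖t m - q b‖ : ℝ) : ℂ)) := by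
  simp only [Matrix.trace, Matrix.diag, Matrix.mul_apply, nearFieldHDeriv, nearFieldH,
    Matrix.of_apply, mul_ite, mul_zero, Finset.sum_ite_eq', Finset.mem_univ, if_true,
    Finset.mul_sum]
  refine Finset.sum_congr rfl fun m _ => ?_
  push_cast
  ring

theorem hasDerivAt_log_re_det_nearFieldA (σ : ℝ) (hσ : 0 < σ ^ 2) {T : Matrix (Fin Nt) (Fin Nt) ℂ}
    (hT : T.PosSemidef) (hq : ∀ m, q b ≠ t m) (i : Fin 3) :
    HasDerivAt
      (fun x => Real.log (nearFieldA lam ρ σ T t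
        (Function.update q b (WithLp.toLp 2 (Function.update (q b) i x)))).det.re)
      (2 * (nearFieldC lam ρ σ T t q * nearFieldHDeriv lam ρ t q b i).trace.re) (q b i) := by
  have h := hasDerivAt_log_re_det_mul_mul_conjTranspose_add_smul_one hT hσ
    (hasDerivAt_nearFieldH_apply lam ρ hq i)
  simpa only [nearFieldA, nearFieldC, Function.update_eq_self, WithLp.toLp_ofLp] using h

end NearField

theorem hasDerivAt_rate_x_coordinate_general {N Nt : ℕ}
    (lam ρ σ : ℝ) (hσ : 0 < σ ^ 2)
    (t : Fin Nt → EuclideanSpace ℝ (Fin 3))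
    (q : Fin N → EuclideanSpace ℝ (Fin 3))
    (T1 T2 : Matrix (Fin Nt) (Fin Nt) ℂ)
    (hT1psd : T1.PosSemidef) (hT2psd : T2.PosSemidef)
    (b : Fin N)
    (hq : ∀ m : Fin Nt, q b ≠ t m) :
    HasDerivAt
      (fun x : ℝ =>
        nearFieldR lam ρ σ T1 T2 t (Function.update q b (WithLp.toLp 2 (Function.update (q b) 0 x))))
      ((4 * Real.pi * ρ / lam) *
        (∑ m : Fin Nt,
          (nearFieldC lam ρ σ T2 t q m b - nearFieldC lam ρ σ T1 t q m b) *
            ((((q b 0 - t m 0) / ‖t m - q b‖ : ℝ)) : ℂ) *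
            Complex.exp (Complex.I * ((2 * Real.pi / lam * ‖t m - q b‖ : ℝ) : ℂ))).im)
      (q b 0) := by
  refine ((hasDerivAt_log_re_det_nearFieldA lam ρ σ hσ hT1psd hq 0).sub
    (hasDerivAt_log_re_det_nearFieldA lam ρ σ hσ hT2psd hq 0)).congr_deriv ?_
  simp only [trace_mul_nearFieldHDeriv, mul_assoc Complex.I, Complex.I_mul_re,
    Complex.im_ofReal_mul, sub_mul, Finset.sum_sub_distrib, Complex.sub_im]
  ring

/-- **Gradient of the rate with respect to the `x`-coordinate of the `b`-th movable antenna.**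
If `q_b ≠ t_m` for all `m`, then the partial derivative of `R` with respect to the
`x`-coordinate `x_b` of `q_b` exists and equals
`(4πρ/λ) · Im( Σ_m [C₂(q)(m,b) − C₁(q)(m,b)] · ((x_b − x_{t,m})/‖t_m − q_b‖) ·
  exp(i(2π/λ)‖t_m − q_b‖) )`. -/
theorem hasDerivAt_rate_x_coordinate {N Nt : ℕ}
    (lam ρ σ : ℝ) (hlam : 0 < lam) (hρ : 0 < ρ) (hσ : 0 < σ ^ 2)
    (t : Fin Nt → EuclideanSpace ℝ (Fin 3))
    (q : Fin N → EuclideanSpace ℝ (Fin 3))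
    (T1 T2 : Matrix (Fin Nt) (Fin Nt) ℂ)
    (hT1 : T1.IsHermitian) (hT2 : T2.IsHermitian)
    (hT1psd : T1.PosSemidef) (hT2psd : T2.PosSemidef)
    (b : Fin N)
    (hq : ∀ m : Fin Nt, q b ≠ t m) :
    HasDerivAt
      (fun x : ℝ =>
        nearFieldR lam ρ σ T1 T2 t (Function.update q b (WithLp.toLp 2 (Function.update (q b) 0 x))))
      ((4 * Real.pi * ρ / lam) *
        (∑ m : Fin Nt,
          (nearFieldC lam ρ σ T2 t q m b - nearFieldC lam ρ σ T1 t q m b) *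
            ((((q b 0 - t m 0) / ‖t m - q b‖ : ℝ)) : ℂ) *
            Complex.exp (Complex.I * ((2 * Real.pi / lam * ‖t m - q b‖ : ℝ) : ℂ))).im)
      (q b 0) :=
  hasDerivAt_rate_x_coordinate_general lam ρ σ hσ t q T1 T2 hT1psd hT2psd b hq
end

section
/- Let X and X̄ be p×q complex matrices and let Y and Ȳ be p×p Hermitian positive definite complex matrices. Then ln det(I_q + X^H Y^{-1} X) ≥ ln det(I_q + X̄^H Ȳ^{-1} X̄) − Tr(X̄^H Ȳ^{-1} X̄) + 2·Re Tr(X̄^H Ȳ^{-1} X) − Re Tr( (Ȳ + X̄X̄^H)^{-1} X̄ X̄^H Ȳ^{-1} (Y + X X^H) ). -/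
/-!
Put `A = 1 + Xᴴ Y⁻¹ X`, `Ā = 1 + X̄ᴴ Ȳ⁻¹ X̄` and `T = Y + X Xᴴ`. Applying `ln x ≤ x - 1` to the
eigenvalues of `Ā^{1/2} A⁻¹ Ā^{1/2}` gives `ln det A ≥ ln det Ā + q - Re Tr (Ā A⁻¹)`.
By Woodbury `A⁻¹ = 1 - Xᴴ T⁻¹ X`, and completing the square shows
`A⁻¹ ≤ 1 - Uᴴ X - Xᴴ U + Uᴴ T U` for every `U`, with equality at `U = T⁻¹ X`; as `Ā ≥ 0`,
`Re Tr (Ā ·)` is monotone. The choice `U = T̄⁻¹ X̄`, for which `Ā Uᴴ = X̄ᴴ Ȳ⁻¹`, turns the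
resulting bound into the stated one.
-/

open Matrix
open scoped ComplexOrder MatrixOrder

namespace Matrix

variable {n m 𝕜 : Type*} [Fintype n] [Fintype m] [RCLike 𝕜]

theorem IsHermitian.re_trace_mul_conjTranspose_mul_comm {B : Matrix n n 𝕜}
    (hB : B.IsHermitian) (X U : Matrix m n 𝕜) :
    RCLike.re (B * (Xᴴ * U)).trace = RCLike.re (B * (Uᴴ * X)).trace := by
  calc RCLike.re (B * (Xᴴ * U)).trace = RCLike.re (star (B * (Xᴴ * U)).trace) :=
        (RCLike.conj_re _).symm
    _ = RCLike.re (B * (Uᴴ * X)).trace := by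
        rw [← trace_conjTranspose, conjTranspose_mul, conjTranspose_mul,
          conjTranspose_conjTranspose, hB.eq, trace_mul_comm]

variable [DecidableEq n]

theorem PosDef.log_re_det_le_re_trace_sub_card {M : Matrix n n 𝕜} (hM : M.PosDef) :
    Real.log (RCLike.re M.det) ≤ RCLike.re M.trace - Fintype.card n := by
  rw [hM.isHermitian.det_eq_prod_eigenvalues, hM.isHermitian.trace_eq_sum_eigenvalues,
    ← RCLike.ofReal_prod, ← RCLike.ofReal_sum, RCLike.ofReal_re, RCLike.ofReal_re,
    Real.log_prod fun i _ => (hM.eigenvalues_pos i).ne']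
  calc ∑ i, Real.log (hM.1.eigenvalues i) ≤ ∑ i, (hM.1.eigenvalues i - 1) :=
        Finset.sum_le_sum fun i _ => Real.log_le_sub_one_of_pos (hM.eigenvalues_pos i)
    _ = _ := by simp [Finset.sum_sub_distrib]

theorem PosSemidef.trace_mul_nonneg {A B : Matrix n n 𝕜} (hA : A.PosSemidef)
    (hB : B.PosSemidef) : 0 ≤ (A * B).trace := by
  set S := CFC.sqrt A
  have hS : Sᴴ = S := (CFC.sqrt_nonneg A).posSemidef.isHermitian
  have htr : (A * B).trace = (S * B * Sᴴ).trace := by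
    rw [hS, trace_mul_cycle, CFC.sqrt_mul_sqrt_self A hA.nonneg]
  rw [htr]
  exact (hB.mul_mul_conjTranspose_same S).trace_nonneg

theorem PosDef.log_re_det_sub_log_re_det_le {A B : Matrix n n 𝕜} (hA : A.PosDef)
    (hB : B.PosDef) :
    Real.log (RCLike.re B.det) - Real.log (RCLike.re A.det) ≤
      RCLike.re (B * A⁻¹).trace - Fintype.card n := by
  set S := CFC.sqrt B
  have hS : star S = S := (CFC.sqrt_nonneg B).posSemidef.isHermitian
  have hSS : S * S = B := CFC.sqrt_mul_sqrt_self B hB.posSemidef.nonneg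
  have hS_unit : IsUnit S := by
    rw [isUnit_iff_isUnit_det, isUnit_iff_ne_zero]
    intro h
    exact hB.det_pos.ne' (by rw [← hSS, det_mul, h, mul_zero])
  have hM : (S * A⁻¹ * S).PosDef := by
    simpa only [hS] using (IsUnit.posDef_star_right_conjugate_iff hS_unit).mpr hA.inv
  obtain ⟨a, ha, ha'⟩ := RCLike.pos_iff_exists_ofReal.mp hA.det_pos
  obtain ⟨b, hb, hb'⟩ := RCLike.pos_iff_exists_ofReal.mp hB.det_pos
  have hdet : (S * A⁻¹ * S).det = ((b / a : ℝ) : 𝕜) := by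
    rw [det_mul, det_mul, mul_right_comm, ← det_mul, hSS, det_nonsing_inv, ← ha', ← hb',
      Ring.inverse_eq_inv', RCLike.ofReal_div, div_eq_mul_inv]
  have htr : (S * A⁻¹ * S).trace = (B * A⁻¹).trace := by
    rw [trace_mul_cycle, hSS]
  have h := hM.log_re_det_le_re_trace_sub_card
  rw [hdet, htr, RCLike.ofReal_re, Real.log_div hb.ne' ha.ne'] at h
  rwa [← ha', ← hb', RCLike.ofReal_re, RCLike.ofReal_re]

variable [DecidableEq m]

theorem inv_one_add_conjTranspose_mul_inv_mul {Y : Matrix m m 𝕜} (X : Matrix m n 𝕜)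
    (hY : IsUnit Y) (hT : IsUnit (Y + X * Xᴴ)) :
    (1 + Xᴴ * Y⁻¹ * X)⁻¹ = 1 - Xᴴ * (Y + X * Xᴴ)⁻¹ * X := by
  have hY_inv_inv : Y⁻¹⁻¹ = Y := nonsing_inv_nonsing_inv _ ((isUnit_iff_isUnit_det _).mp hY)
  rw [add_mul_mul_inv_eq_sub 1 Xᴴ Y⁻¹ X isUnit_one (isUnit_nonsing_inv_iff.mpr hY)]
  · simp [hY_inv_inv]
  · simpa [hY_inv_inv] using hT

theorem one_add_conjTranspose_mul_inv_mul_mul_conjTranspose {Y : Matrix m m 𝕜}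
    (X : Matrix m n 𝕜) (hY : IsUnit Y) :
    (1 + Xᴴ * Y⁻¹ * X) * Xᴴ = Xᴴ * Y⁻¹ * (Y + X * Xᴴ) := by
  rw [isUnit_iff_isUnit_det] at hY
  simp only [Matrix.add_mul, Matrix.mul_add, Matrix.one_mul, Matrix.mul_assoc,
    nonsing_inv_mul _ hY, Matrix.mul_one]

theorem re_trace_mul_inv_one_add_le {B : Matrix n n 𝕜} {Y : Matrix m m 𝕜}
    (hB : B.PosSemidef) (hY : Y.PosDef) (X U : Matrix m n 𝕜) :
    RCLike.re (B * (1 + Xᴴ * Y⁻¹ * X)⁻¹).trace ≤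
      RCLike.re (B * (1 - Uᴴ * X - Xᴴ * U + Uᴴ * (Y + X * Xᴴ) * U)).trace := by
  set T := Y + X * Xᴴ
  have hT : T.PosDef := hY.add_posSemidef (posSemidef_self_mul_conjTranspose X)
  have hT_det : IsUnit T.det := (isUnit_iff_isUnit_det T).mp hT.isUnit
  have hsq : 1 - Uᴴ * X - Xᴴ * U + Uᴴ * T * U =
      (1 + Xᴴ * Y⁻¹ * X)⁻¹ + (U - T⁻¹ * X)ᴴ * T * (U - T⁻¹ * X) := by
    rw [inv_one_add_conjTranspose_mul_inv_mul X hY.isUnit hT.isUnit, conjTranspose_sub,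
      conjTranspose_mul, conjTranspose_nonsing_inv, hT.isHermitian.eq]
    simp only [Matrix.sub_mul, Matrix.mul_sub, Matrix.mul_assoc,
      mul_nonsing_inv_cancel_left _ _ hT_det, nonsing_inv_mul_cancel_left _ _ hT_det]
    abel
  rw [hsq, Matrix.mul_add, trace_add, map_add, le_add_iff_nonneg_right]
  exact (RCLike.nonneg_iff.mp
    (hB.trace_mul_nonneg (hT.posSemidef.conjTranspose_mul_mul_same _))).1

end Matrix

/-- **Matrix log-det lower bound (SCA surrogate).**
For arbitrary `p × q` complex matrices `X`, `X̄` and Hermitian positive definite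
`p × p` complex matrices `Y`, `Ȳ`:
`ln det(I + Xᴴ Y⁻¹ X) ≥ ln det(I + X̄ᴴ Ȳ⁻¹ X̄) − Tr(X̄ᴴ Ȳ⁻¹ X̄) + 2 Re Tr(X̄ᴴ Ȳ⁻¹ X)
   − Re Tr((Ȳ + X̄X̄ᴴ)⁻¹ X̄X̄ᴴ Ȳ⁻¹ (Y + XXᴴ))`. -/
theorem lndet_sca_lower_bound {p q : ℕ}
    (X Xb : Matrix (Fin p) (Fin q) ℂ)
    (Y Yb : Matrix (Fin p) (Fin p) ℂ)
    (hY : Y.PosDef) (hYb : Yb.PosDef) :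
    Real.log ((1 + Xᴴ * Y⁻¹ * X).det.re) ≥
      Real.log ((1 + Xbᴴ * Yb⁻¹ * Xb).det.re)
        - ((Xbᴴ * Yb⁻¹ * Xb).trace).re
        + 2 * ((Xbᴴ * Yb⁻¹ * X).trace).re
        - (((Yb + Xb * Xbᴴ)⁻¹ * (Xb * Xbᴴ) * Yb⁻¹ * (Y + X * Xᴴ)).trace).re := by
  set Ab := 1 + Xbᴴ * Yb⁻¹ * Xb
  set U := (Yb + Xb * Xbᴴ)⁻¹ * Xb
  have hA : (1 + Xᴴ * Y⁻¹ * X).PosDef :=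
    PosDef.one.add_posSemidef (hY.inv.posSemidef.conjTranspose_mul_mul_same X)
  have hAb : Ab.PosDef :=
    PosDef.one.add_posSemidef (hYb.inv.posSemidef.conjTranspose_mul_mul_same Xb)
  have hAbU : Ab * Uᴴ = Xbᴴ * Yb⁻¹ := by
    have hTb := hYb.add_posSemidef (posSemidef_self_mul_conjTranspose Xb)
    rw [conjTranspose_mul, conjTranspose_nonsing_inv, hTb.isHermitian.eq, ← Matrix.mul_assoc,
      one_add_conjTranspose_mul_inv_mul_mul_conjTranspose Xb hYb.isUnit,
      mul_nonsing_inv_cancel_right _ _ ((isUnit_iff_isUnit_det _).mp hTb.isUnit)]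
  have hlog := hA.log_re_det_sub_log_re_det_le hAb
  have hsq := re_trace_mul_inv_one_add_le hAb.posSemidef hY X U
  have htr_const : RCLike.re (Ab * 1).trace = q + (Xbᴴ * Yb⁻¹ * Xb).trace.re := by
    simp [Ab, trace_add]
  have htr_lin : Ab * (Uᴴ * X) = Xbᴴ * Yb⁻¹ * X := by rw [← Matrix.mul_assoc, hAbU]
  have htr_quad : (Ab * (Uᴴ * (Y + X * Xᴴ) * U)).trace =
      ((Yb + Xb * Xbᴴ)⁻¹ * (Xb * Xbᴴ) * Yb⁻¹ * (Y + X * Xᴴ)).trace := by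
    rw [← Matrix.mul_assoc Ab, ← Matrix.mul_assoc Ab, hAbU, trace_mul_comm]
    simp only [U, Matrix.mul_assoc]
  rw [Matrix.mul_add, Matrix.mul_sub, Matrix.mul_sub, trace_add, trace_sub, trace_sub, map_add,
    map_sub, map_sub, IsHermitian.re_trace_mul_conjTranspose_mul_comm hAb.1 X U, htr_const,
    htr_lin, htr_quad] at hsq
  simp only [RCLike.re_to_complex, Fintype.card_fin] at hlog hsq
  linarith
end

section
/- Let K ≥ 1, fix k with 1 ≤ k ≤ K, and let H ∈ ℂ^{N×N_t}, W_1,…,W_K and W̄_1,…,W̄_K ∈ ℂ^{N_t×N_k}, v ∈ ℂ^{N_t}, and σ² > 0. Define F = Σ_{u≠k} H W̄_u W̄_u^H H^H + H v v^H H^H + σ² I_N (Hermitian positive definite) and A = (F + H W̄_k W̄_k^H H^H)^{-1} H W̄_k W̄_k^H H^H F^{-1}. Then ln det( I + W_k^H H^H ( Σ_{u≠k} H W_u W_u^H H^H + H v v^H H^H + σ² I_N )^{-1} H W_k ) ≥ ln det( I + W̄_k^H H^H F^{-1} H W̄_k ) − Tr( W̄_k^H H^H F^{-1} H W̄_k )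 + 2·Re Tr( W̄_k^H H^H F^{-1} H W_k ) − Re Tr( Σ_{u=1}^{K} W_u^H H^H A H W_u ) − Re Tr( A ( H v v^H H^H + σ² I_N ) ). -/
open Matrix
open scoped ComplexOrder

/-!
Write `S = 1 + Gᴴ J⁻¹ G` with `G = H W_k` and `J` the interference-plus-noise covariance, and
`S̄ = 1 + Ḡᴴ F⁻¹ Ḡ` for the expansion point. By Woodbury, `S⁻¹ = 1 - Gᴴ (J + G Gᴴ)⁻¹ G` is the
MMSE matrix, the Loewner-minimum over linear receivers `U` of the MSE matrix
`1 - (Uᴴ G + Gᴴ U - Uᴴ (J + G Gᴴ) U)`. Applying `log x ≤ x - 1` to the eigenvalues of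
`S̄^{1/2} S⁻¹ S̄^{1/2}` gives `log det S̄ - log det S ≤ Re tr (S̄ S⁻¹) - N_k`, and replacing `S⁻¹` by
the MSE matrix of the receiver `Ū = (F + Ḡ Ḡᴴ)⁻¹ Ḡ`, optimal at the expansion point, only
increases the trace. The push-through identities `S̄ Ūᴴ = Ḡᴴ F⁻¹` and `Ū S̄ = F⁻¹ Ḡ` turn that
trace into the terms of the surrogate.
-/

namespace Matrix

section CommRing

variable {α : Type*} [CommRing α] {m n : Type*} [Fintype m] [Fintype n] [DecidableEq m]
  [DecidableEq n]

lemma inv_one_add_mul_inv_mul {J : Matrix n n α} (U : Matrix n m α) (V : Matrix m n α)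
    (hJ : IsUnit J.det) (hJUV : IsUnit (J + U * V).det) :
    (1 + V * J⁻¹ * U)⁻¹ = 1 - V * (J + U * V)⁻¹ * U := by
  have h := add_mul_mul_inv_eq_sub 1 V J⁻¹ U isUnit_one
    (isUnit_nonsing_inv_iff.mpr ((isUnit_iff_isUnit_det J).mpr hJ))
    (by rwa [nonsing_inv_nonsing_inv J hJ, inv_one, Matrix.mul_one, isUnit_iff_isUnit_det])
  simpa only [nonsing_inv_nonsing_inv J hJ, inv_one, Matrix.mul_one, Matrix.one_mul] using h

lemma one_add_mul_inv_mul_mul_mul_inv {F : Matrix n n α} (U : Matrix n m α) (V : Matrix m n α)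
    (hF : IsUnit F.det) (hFUV : IsUnit (F + U * V).det) :
    (1 + V * F⁻¹ * U) * (V * (F + U * V)⁻¹) = V * F⁻¹ := by
  have push : (1 + V * F⁻¹ * U) * V = V * F⁻¹ * (F + U * V) := by
    rw [Matrix.add_mul, Matrix.mul_add, Matrix.one_mul, nonsing_inv_mul_cancel_right _ _ hF,
      Matrix.mul_assoc _ U]
  rw [← Matrix.mul_assoc, push, Matrix.mul_assoc, mul_nonsing_inv _ hFUV, Matrix.mul_one]

lemma inv_mul_mul_one_add_mul_inv_mul {F : Matrix n n α} (U : Matrix n m α) (V : Matrix m n α)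
    (hF : IsUnit F.det) (hFUV : IsUnit (F + U * V).det) :
    (F + U * V)⁻¹ * U * (1 + V * F⁻¹ * U) = F⁻¹ * U := by
  have push : U * (1 + V * F⁻¹ * U) = (F + U * V) * (F⁻¹ * U) := by
    rw [Matrix.add_mul, Matrix.mul_add, Matrix.mul_one, mul_nonsing_inv_cancel_left _ _ hF]
    simp only [Matrix.mul_assoc]
  rw [Matrix.mul_assoc, push, nonsing_inv_mul_cancel_left _ _ hFUV]

end CommRing

lemma trace_mul_sum_mul {ι R m n : Type*} [CommSemiring R] [Fintype m] [Fintype n]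
    (A : Matrix n n R) (s : Finset ι) (X : ι → Matrix n m R) (Y : ι → Matrix m n R) :
    (A * ∑ u ∈ s, X u * Y u).trace = (∑ u ∈ s, Y u * A * X u).trace := by
  simp only [Matrix.mul_sum, trace_sum, ← Matrix.mul_assoc]
  exact Finset.sum_congr rfl fun u _ => by rw [trace_mul_comm, Matrix.mul_assoc]

section RCLike

open scoped MatrixOrder

variable {𝕜 : Type*} [RCLike 𝕜] {m n : Type*} [Fintype n] [DecidableEq n]

lemma PosDef.ofReal_re_det {A : Matrix n n 𝕜} (hA : A.PosDef) :
    ((RCLike.re A.det : ℝ) : 𝕜) = A.det :=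
  (RCLike.pos_iff_exists_ofReal.mp hA.det_pos).elim fun _ ⟨_, h⟩ => by rw [← h, RCLike.ofReal_re]

lemma PosDef.re_det_pos {A : Matrix n n 𝕜} (hA : A.PosDef) : 0 < RCLike.re A.det :=
  (RCLike.pos_iff.mp hA.det_pos).1

lemma PosDef.log_re_det_le_re_trace_sub_card_s4 {A : Matrix n n 𝕜} (hA : A.PosDef) :
    Real.log (RCLike.re A.det) ≤ RCLike.re A.trace - Fintype.card n := by
  have hpos := hA.eigenvalues_pos
  rw [hA.1.det_eq_prod_eigenvalues, hA.1.trace_eq_sum_eigenvalues, ← RCLike.ofReal_prod,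
    ← RCLike.ofReal_sum, RCLike.ofReal_re, RCLike.ofReal_re,
    Real.log_prod fun i _ => (hpos i).ne']
  calc ∑ i, Real.log (hA.1.eigenvalues i) ≤ ∑ i, (hA.1.eigenvalues i - 1) :=
        Finset.sum_le_sum fun i _ => Real.log_le_sub_one_of_pos (hpos i)
    _ = _ := by simp [Finset.sum_sub_distrib]

lemma PosDef.log_re_det_sub_log_re_det_le_s4 {X Y : Matrix n n 𝕜} (hX : X.PosDef) (hY : Y.PosDef) :
    Real.log (RCLike.re Y.det) - Real.log (RCLike.re X.det) ≤
      RCLike.re (Y * X⁻¹).trace - Fintype.card n := by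
  set R := CFC.sqrt Y
  have hRR : R * R = Y := CFC.sqrt_mul_sqrt_self Y hY.posSemidef.nonneg
  have hRs : star R = R := (CFC.sqrt_nonneg Y).isSelfAdjoint.star_eq
  have hM : (R * X⁻¹ * R).PosDef := by
    have hR : IsUnit R := hY.isStrictlyPositive.sqrt.isUnit
    have := hR.isStrictlyPositive_star_left_conjugate_iff.mpr hX.inv.isStrictlyPositive
    rw [hRs] at this
    exact this.posDef
  have hdet : RCLike.re (R * X⁻¹ * R).det = RCLike.re Y.det / RCLike.re X.det := by
    rw [det_mul, det_mul, det_nonsing_inv, Ring.inverse_eq_inv', mul_right_comm, ← det_mul, hRR]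
    conv_lhs => rw [← hY.ofReal_re_det, ← hX.ofReal_re_det]
    rw [← RCLike.ofReal_inv, ← RCLike.ofReal_mul, RCLike.ofReal_re, div_eq_mul_inv]
  have htr : (R * X⁻¹ * R).trace = (Y * X⁻¹).trace := by
    rw [trace_mul_cycle, ← hRR, Matrix.mul_assoc]
  have := hM.log_re_det_le_re_trace_sub_card_s4
  rwa [hdet, htr, Real.log_div hY.re_det_pos.ne' hX.re_det_pos.ne'] at this

lemma PosSemidef.re_trace_mul_le_re_trace_mul {Y X X' : Matrix n n 𝕜} (hY : Y.PosSemidef)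
    (hX : X ≤ X') : RCLike.re (Y * X).trace ≤ RCLike.re (Y * X').trace := by
  set R := CFC.sqrt Y
  have hRR : R * R = Y := CFC.sqrt_mul_sqrt_self Y hY.nonneg
  have hconj : R * X * R ≤ R * X' * R := conjugate_le_conjugate_of_nonneg hX (CFC.sqrt_nonneg Y)
  have htr (Z : Matrix n n 𝕜) : (Y * Z).trace = (R * Z * R).trace := by
    rw [trace_mul_cycle, ← hRR, Matrix.mul_assoc]
  have := (RCLike.nonneg_iff.mp (le_iff.mp hconj).trace_nonneg).1
  rwa [trace_sub, map_sub, sub_nonneg, ← htr, ← htr] at this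

variable [Fintype m]

lemma PosDef.conjTranspose_mul_add_sub_le {B : Matrix n n 𝕜} (hB : B.PosDef)
    (G U : Matrix n m 𝕜) : Uᴴ * G + Gᴴ * U - Uᴴ * B * U ≤ Gᴴ * B⁻¹ * G := by
  have hBu : IsUnit B.det := (isUnit_iff_isUnit_det B).mp hB.isUnit
  have hBinv : (B⁻¹)ᴴ = B⁻¹ := by rw [conjTranspose_nonsing_inv, hB.1.eq]
  have square : Gᴴ * B⁻¹ * G - (Uᴴ * G + Gᴴ * U - Uᴴ * B * U)
      = (U - B⁻¹ * G)ᴴ * B * (U - B⁻¹ * G) := by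
    simp only [conjTranspose_sub, conjTranspose_mul, hBinv, Matrix.sub_mul, Matrix.mul_sub,
      Matrix.mul_assoc, mul_nonsing_inv_cancel_left _ _ hBu, nonsing_inv_mul_cancel_left _ _ hBu]
    abel
  rw [le_iff, square]
  exact hB.posSemidef.conjTranspose_mul_mul_same _

variable [DecidableEq m]

lemma PosDef.re_trace_one_add_mul_one_sub_eq {F : Matrix n n 𝕜} (hF : F.PosDef)
    (G Gb : Matrix n m 𝕜) (B : Matrix n n 𝕜) :
    let Ub := (F + Gb * Gbᴴ)⁻¹ * Gb
    RCLike.re ((1 + Gbᴴ * F⁻¹ * Gb) * (1 - (Ubᴴ * G + Gᴴ * Ub - Ubᴴ * B * Ub))).trace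
      = Fintype.card m + RCLike.re (Gbᴴ * F⁻¹ * Gb).trace
        - 2 * RCLike.re (Gbᴴ * F⁻¹ * G).trace
        + RCLike.re ((F + Gb * Gbᴴ)⁻¹ * (Gb * Gbᴴ) * F⁻¹ * B).trace := by
  intro Ub
  have hFG : (F + Gb * Gbᴴ).PosDef := hF.add_posSemidef (posSemidef_self_mul_conjTranspose Gb)
  have hFu : IsUnit F.det := (isUnit_iff_isUnit_det F).mp hF.isUnit
  have hFGu : IsUnit (F + Gb * Gbᴴ).det := (isUnit_iff_isUnit_det _).mp hFG.isUnit
  have hleft : (1 + Gbᴴ * F⁻¹ * Gb) * Ubᴴ = Gbᴴ * F⁻¹ := by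
    rw [conjTranspose_mul, conjTranspose_nonsing_inv, hFG.1.eq,
      one_add_mul_inv_mul_mul_mul_inv Gb Gbᴴ hFu hFGu]
  have hright : Ub * (1 + Gbᴴ * F⁻¹ * Gb) = F⁻¹ * Gb :=
    inv_mul_mul_one_add_mul_inv_mul Gb Gbᴴ hFu hFGu
  set Sb := 1 + Gbᴴ * F⁻¹ * Gb
  have h1 : (Sb * (Ubᴴ * G)).trace = (Gbᴴ * F⁻¹ * G).trace := by
    rw [← Matrix.mul_assoc, hleft]
  have h2 : (Sb * (Gᴴ * Ub)).trace = star (Gbᴴ * F⁻¹ * G).trace := by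
    rw [trace_mul_comm, Matrix.mul_assoc, hright, ← trace_conjTranspose]
    simp only [conjTranspose_mul, conjTranspose_conjTranspose, conjTranspose_nonsing_inv,
      hF.1.eq, Matrix.mul_assoc]
  have h3 : (Sb * (Ubᴴ * B * Ub)).trace
      = ((F + Gb * Gbᴴ)⁻¹ * (Gb * Gbᴴ) * F⁻¹ * B).trace := by
    rw [show Sb * (Ubᴴ * B * Ub) = Sb * Ubᴴ * B * Ub by simp only [Matrix.mul_assoc],
      trace_mul_comm, hleft]
    simp only [Ub, Matrix.mul_assoc]
  simp only [Matrix.mul_sub, Matrix.mul_add, Matrix.mul_one, trace_sub, trace_add, h1, h2, h3,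
    Sb, trace_one, map_add, map_sub, RCLike.star_def, RCLike.conj_re, RCLike.natCast_re]
  ring

theorem PosDef.le_log_re_det_one_add_conjTranspose_mul_inv_mul {J F : Matrix n n 𝕜}
    (hJ : J.PosDef) (hF : F.PosDef) (G Gb : Matrix n m 𝕜) :
    Real.log (RCLike.re (1 + Gbᴴ * F⁻¹ * Gb).det) - RCLike.re (Gbᴴ * F⁻¹ * Gb).trace
        + 2 * RCLike.re (Gbᴴ * F⁻¹ * G).trace
        - RCLike.re ((F + Gb * Gbᴴ)⁻¹ * (Gb * Gbᴴ) * F⁻¹ * (J + G * Gᴴ)).trace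
      ≤ Real.log (RCLike.re (1 + Gᴴ * J⁻¹ * G).det) := by
  have hB : (J + G * Gᴴ).PosDef := hJ.add_posSemidef (posSemidef_self_mul_conjTranspose G)
  have hS : (1 + Gᴴ * J⁻¹ * G).PosDef :=
    PosDef.one.add_posSemidef (hJ.inv.posSemidef.conjTranspose_mul_mul_same G)
  have hSb : (1 + Gbᴴ * F⁻¹ * Gb).PosDef :=
    PosDef.one.add_posSemidef (hF.inv.posSemidef.conjTranspose_mul_mul_same Gb)
  have woodbury : (1 + Gᴴ * J⁻¹ * G)⁻¹ = 1 - Gᴴ * (J + G * Gᴴ)⁻¹ * G :=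
    inv_one_add_mul_inv_mul G Gᴴ ((isUnit_iff_isUnit_det J).mp hJ.isUnit)
      ((isUnit_iff_isUnit_det _).mp hB.isUnit)
  have concavity := hS.log_re_det_sub_log_re_det_le_s4 hSb
  have mmse := hSb.posSemidef.re_trace_mul_le_re_trace_mul
    (sub_le_sub_left (hB.conjTranspose_mul_add_sub_le G ((F + Gb * Gbᴴ)⁻¹ * Gb)) 1)
  rw [woodbury] at concavity
  rw [hF.re_trace_one_add_mul_one_sub_eq G Gb (J + G * Gᴴ)] at mmse
  linarith

end RCLike

end Matrix

lemma posDef_sum_mul_mul_add_mul_vecMulVec_add_smul_one {ι m n p : Type*} [Fintype m]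
    [DecidableEq m] [Fintype n] [Fintype p] (s : Finset ι) (H : Matrix m n ℂ) (P : ι → Matrix n p ℂ)
    (v : n → ℂ) {c : ℝ} (hc : 0 < c) :
    ((∑ u ∈ s, H * P u * (P u)ᴴ * Hᴴ) + H * vecMulVec v (star v) * Hᴴ + (c : ℂ) • 1).PosDef := by
  refine PosDef.posSemidef_add ?_ (PosDef.one.smul (by exact_mod_cast hc))
  refine (posSemidef_sum s fun u _ => ?_).add
    ((posSemidef_vecMulVec_self_star v).mul_mul_conjTranspose_same H)
  simpa only [conjTranspose_mul, Matrix.mul_assoc] using posSemidef_self_mul_conjTranspose (H * P u)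

theorem rate_sca_lower_bound_general {N Nt Nk K : ℕ} (k : Fin K)
    (H : Matrix (Fin N) (Fin Nt) ℂ)
    (W Wb : Fin K → Matrix (Fin Nt) (Fin Nk) ℂ)
    (v : Fin Nt → ℂ) (σ : ℝ) (hσ : 0 < σ ^ 2) :
    let F : Matrix (Fin N) (Fin N) ℂ :=
      (∑ u ∈ Finset.univ.erase k, H * Wb u * (Wb u)ᴴ * Hᴴ)
        + H * Matrix.vecMulVec v (star v) * Hᴴ + ((σ ^ 2 : ℝ) : ℂ) • 1
    let A : Matrix (Fin N) (Fin N) ℂ :=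
      (F + H * Wb k * (Wb k)ᴴ * Hᴴ)⁻¹ * (H * Wb k * (Wb k)ᴴ * Hᴴ) * F⁻¹
    Real.log ((1 + (W k)ᴴ * Hᴴ *
        ((∑ u ∈ Finset.univ.erase k, H * W u * (W u)ᴴ * Hᴴ)
          + H * Matrix.vecMulVec v (star v) * Hᴴ + ((σ ^ 2 : ℝ) : ℂ) • 1)⁻¹
        * H * W k).det.re) ≥
      Real.log ((1 + (Wb k)ᴴ * Hᴴ * F⁻¹ * H * Wb k).det.re)
        - (((Wb k)ᴴ * Hᴴ * F⁻¹ * H * Wb k).trace).re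
        + 2 * (((Wb k)ᴴ * Hᴴ * F⁻¹ * H * W k).trace).re
        - ((∑ u, (W u)ᴴ * Hᴴ * A * H * W u).trace).re
        - ((A * (H * Matrix.vecMulVec v (star v) * Hᴴ + ((σ ^ 2 : ℝ) : ℂ) • 1)).trace).re := by
  intro F A
  set S := H * vecMulVec v (star v) * Hᴴ + ((σ ^ 2 : ℝ) : ℂ) • 1
  have hJ := posDef_sum_mul_mul_add_mul_vecMulVec_add_smul_one (Finset.univ.erase k) H W v hσ
  have hF : F.PosDef :=
    posDef_sum_mul_mul_add_mul_vecMulVec_add_smul_one (Finset.univ.erase k) H Wb v hσ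
  have key := hJ.le_log_re_det_one_add_conjTranspose_mul_inv_mul hF (H * W k) (H * Wb k)
  have hsplit : (∑ u ∈ Finset.univ.erase k, H * W u * (W u)ᴴ * Hᴴ)
      + H * vecMulVec v (star v) * Hᴴ + ((σ ^ 2 : ℝ) : ℂ) • 1 + H * W k * (H * W k)ᴴ
      = (∑ u, H * W u * ((W u)ᴴ * Hᴴ)) + S := by
    rw [← Finset.add_sum_erase _ _ (Finset.mem_univ k)]
    simp only [S, conjTranspose_mul, Matrix.mul_assoc]
    abel
  rw [hsplit, Matrix.mul_add, trace_add, map_add, trace_mul_sum_mul] at key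
  simp only [A, conjTranspose_mul, Matrix.mul_assoc, RCLike.re_to_complex] at key ⊢
  linarith

/-- **Concave lower bound (SCA surrogate) on the achievable rate of user `k`.**
With `H ∈ ℂ^{N×Nt}`, precoders `W u, W̄ u ∈ ℂ^{Nt×Nk}` for `u = 1, …, K`, sensing
beamformer `v ∈ ℂ^{Nt}` and noise variance `σ² > 0`, setting
`F = Σ_{u≠k} H W̄_u W̄_uᴴ Hᴴ + H v vᴴ Hᴴ + σ² I` and
`A = (F + H W̄_k W̄_kᴴ Hᴴ)⁻¹ H W̄_k W̄_kᴴ Hᴴ F⁻¹`, the achievable rate `R_k` of user `k`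
is lower bounded by the surrogate `R̂_k` obtained by expanding around `W̄_1, …, W̄_K`. -/
theorem rate_sca_lower_bound {N Nt Nk K : ℕ} (hK : 1 ≤ K) (k : Fin K)
    (H : Matrix (Fin N) (Fin Nt) ℂ)
    (W Wb : Fin K → Matrix (Fin Nt) (Fin Nk) ℂ)
    (v : Fin Nt → ℂ) (σ : ℝ) (hσ : 0 < σ ^ 2) :
    let F : Matrix (Fin N) (Fin N) ℂ :=
      (∑ u ∈ Finset.univ.erase k, H * Wb u * (Wb u)ᴴ * Hᴴ)
        + H * Matrix.vecMulVec v (star v) * Hᴴ + ((σ ^ 2 : ℝ) : ℂ) • 1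
    let A : Matrix (Fin N) (Fin N) ℂ :=
      (F + H * Wb k * (Wb k)ᴴ * Hᴴ)⁻¹ * (H * Wb k * (Wb k)ᴴ * Hᴴ) * F⁻¹
    Real.log ((1 + (W k)ᴴ * Hᴴ *
        ((∑ u ∈ Finset.univ.erase k, H * W u * (W u)ᴴ * Hᴴ)
          + H * Matrix.vecMulVec v (star v) * Hᴴ + ((σ ^ 2 : ℝ) : ℂ) • 1)⁻¹
        * H * W k).det.re) ≥
      Real.log ((1 + (Wb k)ᴴ * Hᴴ * F⁻¹ * H * Wb k).det.re)
        - (((Wb k)ᴴ * Hᴴ * F⁻¹ * H * Wb k).trace).re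
        + 2 * (((Wb k)ᴴ * Hᴴ * F⁻¹ * H * W k).trace).re
        - ((∑ u, (W u)ᴴ * Hᴴ * A * H * W u).trace).re
        - ((A * (H * Matrix.vecMulVec v (star v) * Hᴴ + ((σ ^ 2 : ℝ) : ℂ) • 1)).trace).re :=
  rate_sca_lower_bound_general k H W Wb v σ hσ
end
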